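/- Let G₁ and G₂ be finite abelian groups. Then there is an order isomorphism between Iso(G₁) and Iso(G₂) if and only if there is a bijection σ between the set of prime divisors of |G₁| and the set of prime divisors of |G₂| such that for every prime p dividing |G₁|, a Sylow p-subgroup S_p of G₁ and a Sylow σ(p)-subgroup S'_{σ(p)} of G₂ satisfy: Iso(S_p) and Iso(S'_{σ(p)}) are order isomorphic (in particular |S_p| = σ(p)^{β} where p^{β} = |S_p|, i.e., the exponents match). -/

import Mathlib

/-- The setoid on subgroups of `G` given by group isomorphism. -/
def isoSetoid (G : Type*) [Group G] : Setoid (Subgroup G) where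
  r H K := Nonempty (H ≃* K)
  iseqv := ⟨fun H => ⟨MulEquiv.refl H⟩, fun ⟨e⟩ => ⟨e.symm⟩, fun ⟨e⟩ ⟨f⟩ => ⟨e.trans f⟩⟩

/-- `IsoClasses G` is the set of equivalence classes of subgroups of `G`
under group isomorphism. -/
def IsoClasses (G : Type*) [Group G] : Type _ := Quotient (isoSetoid G)

/-- The class of a subgroup `H` in `IsoClasses G`. -/
def IsoCls {G : Type*} [Group G] (H : Subgroup G) : IsoClasses G :=
  Quotient.mk (isoSetoid G) H

/-- `[H] ≤ [K]` iff some member of `[H]` is contained in some member of `[K]`. -/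
instance instLEIsoClasses (G : Type*) [Group G] : LE (IsoClasses G) where
  le x y := ∃ H K : Subgroup G, IsoCls H = x ∧ IsoCls K = y ∧ H ≤ K

/-!
An order isomorphism `F : Iso(G₁) ≃o Iso(G₂)` preserves atoms, and the atoms of `Iso(G)` are the
classes of subgroups of prime order, one for each prime divisor of `|G|`; this gives `σ`. For
abelian `G`, the classes below `[S_p]` are exactly those above no atom other than the one of
order `p`, so `F [S_p] = [S'_{σ p}]` and `F` restricts to `Iso(S_p) ≅ Iic [S_p] ≅ Iic [S'_{σ p}]`.
In `Iso(P)` for a `p`-group `P` the height of `[H]` is `log_p |H|`, which recovers the exponents.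

Conversely, a finite abelian group is the internal direct product of its primary components, so
`H` embeds into `K` iff each `H ⊓ S_p` embeds into `K ⊓ S_p`, and every family of classes below
the `[S_p]` is realised by their join; hence `Iso(G) ≅ ∏ p, Iic [S_p]`.
-/

namespace OrderIso

variable {α β : Type*} [Preorder α] [Preorder β]

def iicCongr (e : α ≃o β) {a : α} {b : β} (h : e a = b) : Set.Iic a ≃o Set.Iic b where
  toEquiv := e.toEquiv.subtypeEquiv fun x => by simp [← h]
  map_rel_iff' := e.map_rel_iff

def piCongr {ι ι' : Type*} {A : ι → Type*} {B : ι' → Type*} [∀ i, LE (A i)]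
    [∀ j, LE (B j)] (σ : ι ≃ ι') (e : ∀ i, A i ≃o B (σ i)) :
    (∀ i, A i) ≃o ∀ j, B j where
  toEquiv := σ.piCongr fun i => (e i).toEquiv
  map_rel_iff' {f g} := by
    simp only [Pi.le_def, ← σ.forall_congr_right, Equiv.piCongr_apply_apply]
    exact forall_congr' fun i => (e i).le_iff_le

end OrderIso

namespace CommGroup

variable {G : Type*} [CommGroup G]

theorem _root_.Sylow.coe_eq_primaryComponent {p : ℕ} [Fact p.Prime] (P : Sylow p G) :
    (P : Subgroup G) = primaryComponent G p := by
  refine le_antisymm (fun x hx => ?_) (primaryComponent.isPGroup.le_sylow_of_normal P)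
  obtain ⟨k, hk⟩ := P.isPGroup' ⟨x, hx⟩
  exact ⟨k, by simpa using congrArg Subtype.val hk⟩

theorem card_primaryComponent [Finite G] {p : ℕ} [Fact p.Prime] :
    Nat.card (primaryComponent G p) = p ^ (Nat.card G).factorization p := by
  obtain ⟨P⟩ := (inferInstance : Nonempty (Sylow p G))
  rw [← P.coe_eq_primaryComponent, P.card_eq_multiplicity]

theorem iSupIndep_primaryComponent [Finite G] :
    iSupIndep fun p : (Nat.card G).primeFactors => primaryComponent G p := by
  let (p : (Nat.card G).primeFactors) : Fintype (primaryComponent G p) := Fintype.ofFinite _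
  refine Subgroup.independent_of_coprime_order (fun _ _ _ x y _ _ => Commute.all x y) ?_
  intro p q hpq
  have := Fact.mk (Nat.prime_of_mem_primeFactors p.2)
  have := Fact.mk (Nat.prime_of_mem_primeFactors q.2)
  simp only [← Nat.card_eq_fintype_card]
  exact IsPGroup.coprime_card_of_ne _ _ (Subtype.coe_ne_coe.mpr hpq) _ _
    primaryComponent.isPGroup primaryComponent.isPGroup

noncomputable def _root_.iSupIndep.piMulEquivISup {ι : Type*} [Fintype ι]
    {A : ι → Subgroup G} (hA : iSupIndep A) : (∀ i, A i) ≃* ↥(⨆ i, A i) :=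
  (MonoidHom.ofInjective (Subgroup.injective_noncommPiCoprod_of_iSupIndep
      (hcomm := fun _ _ _ x y _ _ => Commute.all x y) hA)).trans
    (MulEquiv.subgroupCongr Subgroup.noncommPiCoprod_range)

theorem iSup_primaryComponent [Finite G] :
    ⨆ p : (Nat.card G).primeFactors, primaryComponent G p = ⊤ := by
  refine Subgroup.eq_top_of_card_eq _ ?_
  rw [← Nat.card_congr iSupIndep_primaryComponent.piMulEquivISup.toEquiv, Nat.card_pi]
  calc ∏ p : (Nat.card G).primeFactors, Nat.card (primaryComponent G p)
      = ∏ p : (Nat.card G).primeFactors, (p : ℕ) ^ (Nat.card G).factorization p :=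
        Finset.prod_congr rfl fun p _ =>
          have := Fact.mk (Nat.prime_of_mem_primeFactors p.2)
          card_primaryComponent
    _ = Nat.card G := (Finset.prod_coe_sort _ fun p => p ^ (Nat.card G).factorization p).trans
        (Nat.prod_primeFactors_pow_factorization Nat.card_pos.ne').symm

theorem iSup_inf_primaryComponent [Finite G] (H : Subgroup G) :
    ⨆ p : (Nat.card G).primeFactors, H ⊓ primaryComponent G p = H := by
  refine le_antisymm (iSup_le fun _ => inf_le_left) ?_
  calc H = (⨆ p : (Nat.card H).primeFactors, primaryComponent H p).map H.subtype := by
        rw [iSup_primaryComponent, ← MonoidHom.range_eq_map, Subgroup.range_subtype]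
    _ ≤ ⨆ p : (Nat.card G).primeFactors, H ⊓ primaryComponent G p := by
        rw [Subgroup.map_iSup]
        refine iSup_le fun p => le_iSup_of_le ⟨p, Nat.primeFactors_mono
          (Subgroup.card_subgroup_dvd_card H) Nat.card_pos.ne' p.2⟩ ?_
        rintro _ ⟨x, ⟨k, hk⟩, rfl⟩
        exact ⟨x.2, k, by simpa using congrArg Subtype.val hk⟩

theorem iSup_inf_primaryComponent_of_le [Finite G]
    {A : (Nat.card G).primeFactors → Subgroup G} (hA : ∀ p, A p ≤ primaryComponent G p)
    (p : (Nat.card G).primeFactors) :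
    (⨆ q, A q) ⊓ primaryComponent G p = A p := by
  refine le_antisymm (fun x hx => ?_) (le_inf (le_iSup A p) (hA p))
  obtain ⟨hx, hxp⟩ := Subgroup.mem_inf.mp hx
  rw [iSup_split_single A p, Subgroup.mem_sup] at hx
  obtain ⟨y, hy, z, hz, rfl⟩ := hx
  have hzp : z ∈ primaryComponent G p := by
    simpa using mul_mem (inv_mem (hA p hy)) hxp
  have hz' : z ∈ ⨆ (q) (_ : q ≠ p), primaryComponent G q := iSup₂_mono (fun q _ => hA q) hz
  rw [(Subgroup.disjoint_def.mp (iSupIndep_primaryComponent p)) hzp hz', mul_one]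
  exact hy

end CommGroup

namespace IsoClasses

section Group

variable {G : Type*} [Group G]

@[elab_as_elim]
theorem ind {motive : IsoClasses G → Prop} (h : ∀ H : Subgroup G, motive (IsoCls H))
    (x : IsoClasses G) : motive x :=
  Quotient.ind h x

theorem isoCls_eq_isoCls_iff {H K : Subgroup G} :
    IsoCls H = IsoCls K ↔ Nonempty (H ≃* K) :=
  Quotient.eq

theorem isoCls_range {H : Subgroup G} {f : H →* G} (hf : Function.Injective f) :
    IsoCls f.range = IsoCls H :=
  isoCls_eq_isoCls_iff.mpr ⟨(MonoidHom.ofInjective hf).symm⟩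

theorem isoCls_le_of_range_le {H K : Subgroup G} {f : H →* G} (hf : Function.Injective f)
    (h : f.range ≤ K) : IsoCls H ≤ IsoCls K :=
  ⟨f.range, K, isoCls_range hf, rfl, h⟩

theorem isoCls_le_isoCls_iff {H K : Subgroup G} :
    IsoCls H ≤ IsoCls K ↔ ∃ f : H →* K, Function.Injective f := by
  constructor
  · rintro ⟨A, B, hA, hB, hAB⟩
    obtain ⟨eA⟩ := isoCls_eq_isoCls_iff.mp hA
    obtain ⟨eB⟩ := isoCls_eq_isoCls_iff.mp hB
    exact ⟨(eB.toMonoidHom.comp (Subgroup.inclusion hAB)).comp eA.symm.toMonoidHom,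
      (eB.injective.comp (Subgroup.inclusion_injective hAB)).comp eA.symm.injective⟩
  · rintro ⟨f, hf⟩
    refine isoCls_le_of_range_le (f := K.subtype.comp f) (K.subtype_injective.comp hf) ?_
    rintro _ ⟨x, rfl⟩
    exact (f x).2

theorem isoCls_le_isoCls_of_mulEquiv {G' : Type*} [Group G'] {H K : Subgroup G}
    {H' K' : Subgroup G'} (h : IsoCls H ≤ IsoCls K) (e₁ : H ≃* H') (e₂ : K ≃* K') :
    IsoCls H' ≤ IsoCls K' := by
  obtain ⟨f, hf⟩ := isoCls_le_isoCls_iff.mp h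
  exact isoCls_le_isoCls_iff.mpr ⟨(e₂.toMonoidHom.comp f).comp e₁.symm.toMonoidHom,
    (e₂.injective.comp hf).comp e₁.symm.injective⟩

theorem le_isoCls_iff {x : IsoClasses G} {K : Subgroup G} :
    x ≤ IsoCls K ↔ ∃ H ≤ K, IsoCls H = x := by
  refine ⟨fun h => ?_, fun ⟨H, hHK, hH⟩ => ⟨H, K, hH, rfl, hHK⟩⟩
  induction x using ind with | h A => ?_
  obtain ⟨f, hf⟩ := isoCls_le_isoCls_iff.mp h
  refine ⟨(K.subtype.comp f).range, ?_, isoCls_range (K.subtype_injective.comp hf)⟩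
  rintro _ ⟨x, rfl⟩
  exact (f x).2

noncomputable def card : IsoClasses G → ℕ :=
  Quotient.lift (fun H : Subgroup G => Nat.card H) fun _ _ ⟨e⟩ => Nat.card_congr e.toEquiv

@[simp]
theorem card_isoCls (H : Subgroup G) : card (IsoCls H) = Nat.card H :=
  rfl

theorem card_dvd_card_of_le {x y : IsoClasses G} (h : x ≤ y) : card x ∣ card y := by
  obtain ⟨H, K, rfl, rfl, hHK⟩ := h
  exact Subgroup.card_dvd_of_le hHK

theorem eq_of_le_of_card_le [Finite G] {x y : IsoClasses G} (h : x ≤ y)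
    (hc : card y ≤ card x) : x = y := by
  obtain ⟨H, K, rfl, rfl, hHK⟩ := h
  rw [Subgroup.eq_of_le_of_card_ge hHK hc]

theorem card_pos [Finite G] (x : IsoClasses G) : 0 < card x := by
  induction x using ind with | h H => exact Nat.card_pos

instance [Finite G] : PartialOrder (IsoClasses G) where
  le_refl x := by
    induction x using ind with | h H => exact ⟨H, H, rfl, rfl, le_rfl⟩
  le_trans x y z hxy hyz := by
    induction x using ind with | h H => ?_
    induction z using ind with | h L => ?_
    obtain ⟨K, hK, rfl⟩ := le_isoCls_iff.mp hyz
    obtain ⟨f, hf⟩ := isoCls_le_isoCls_iff.mp hxy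
    exact isoCls_le_isoCls_iff.mpr ⟨(Subgroup.inclusion hK).comp f,
      (Subgroup.inclusion_injective hK).comp hf⟩
  le_antisymm x y hxy hyx :=
    eq_of_le_of_card_le hxy (Nat.le_of_dvd (card_pos x) (card_dvd_card_of_le hyx))

instance : OrderBot (IsoClasses G) where
  bot := IsoCls ⊥
  bot_le x := by
    induction x using ind with | h H => exact ⟨⊥, H, rfl, rfl, bot_le⟩

instance : OrderTop (IsoClasses G) where
  top := IsoCls ⊤
  le_top x := by
    induction x using ind with | h H => exact ⟨H, ⊤, rfl, rfl, le_top⟩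

@[simp]
theorem card_bot : card (⊥ : IsoClasses G) = 1 :=
  Subgroup.card_bot

@[simp]
theorem card_top : card (⊤ : IsoClasses G) = Nat.card G :=
  Subgroup.card_top

theorem card_dvd_natCard (x : IsoClasses G) : card x ∣ Nat.card G := by
  induction x using ind with | h H => exact Subgroup.card_subgroup_dvd_card H

theorem card_eq_one_iff {x : IsoClasses G} : card x = 1 ↔ x = ⊥ := by
  refine ⟨fun h => ?_, fun h => h ▸ card_bot⟩
  induction x using ind with | h H => rw [card_isoCls, Subgroup.card_eq_one] at h; rw [h]; rfl

theorem eq_of_card_eq_prime {x y : IsoClasses G} {p : ℕ} (hp : p.Prime) (hx : card x = p)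
    (hy : card y = p) : x = y := by
  induction x using ind with | h H => ?_
  induction y using ind with | h K => ?_
  have : Fact p.Prime := ⟨hp⟩
  exact isoCls_eq_isoCls_iff.mpr ⟨mulEquivOfPrimeCardEq hx hy⟩

section Finite

variable [Finite G]

theorem card_strictMono : StrictMono (card : IsoClasses G → ℕ) := fun _ y h =>
  lt_of_le_of_ne (Nat.le_of_dvd (card_pos y) (card_dvd_card_of_le h.le))
    fun hc => h.ne (eq_of_le_of_card_le h.le hc.ge)

theorem exists_le_card_eq_prime {x : IsoClasses G} {q : ℕ} (hq : q.Prime) (h : q ∣ card x) :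
    ∃ a ≤ x, card a = q := by
  induction x using ind with | h H => ?_
  have : Fact q.Prime := ⟨hq⟩
  obtain ⟨g, hg⟩ := exists_prime_orderOf_dvd_card' (G := H) q h
  refine ⟨IsoCls (Subgroup.zpowers (g : G)),
    ⟨_, H, rfl, rfl, Subgroup.zpowers_le.mpr g.2⟩, ?_⟩
  rw [card_isoCls, Nat.card_zpowers, Subgroup.orderOf_coe, hg]

theorem isAtom_iff_prime_card {x : IsoClasses G} : IsAtom x ↔ (card x).Prime := by
  refine ⟨fun hx => ?_,
    fun hp => ⟨fun h => hp.ne_one (card_eq_one_iff.mpr h), fun y hy => ?_⟩⟩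
  · obtain ⟨q, hq, hqx⟩ := Nat.exists_prime_and_dvd (mt card_eq_one_iff.mp hx.1)
    obtain ⟨a, hax, rfl⟩ := exists_le_card_eq_prime hq hqx
    obtain rfl | rfl := hx.le_iff.mp hax
    · exact absurd card_bot hq.ne_one
    · exact hq
  · have := (Nat.dvd_prime hp).mp (card_dvd_card_of_le hy.le)
    exact card_eq_one_iff.mp (this.resolve_right (card_strictMono hy).ne)

variable (G) in
noncomputable def atomsEquivPrimeFactors :
    {x : IsoClasses G // IsAtom x} ≃ (Nat.card G).primeFactors :=
  Equiv.ofBijective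
    (fun x => ⟨card x.1, Nat.mem_primeFactors.mpr
      ⟨isAtom_iff_prime_card.mp x.2, card_dvd_natCard _, Nat.card_pos.ne'⟩⟩)
    ⟨fun x y h => Subtype.ext (eq_of_card_eq_prime (isAtom_iff_prime_card.mp x.2)
        rfl (congrArg Subtype.val h).symm),
      fun p => by
        have hp := Nat.prime_of_mem_primeFactors p.2
        obtain ⟨a, -, ha⟩ := exists_le_card_eq_prime (x := (⊤ : IsoClasses G)) hp
          (by rw [card_top]; exact Nat.dvd_of_mem_primeFactors p.2)
        exact ⟨⟨a, isAtom_iff_prime_card.mpr (ha ▸ hp)⟩, Subtype.ext ha⟩⟩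

@[simp]
theorem coe_atomsEquivPrimeFactors (a : {x : IsoClasses G // IsAtom x}) :
    (atomsEquivPrimeFactors G a : ℕ) = card a.1 :=
  rfl

noncomputable def primeFactorsEquiv {G' : Type*} [Group G'] [Finite G']
    (F : IsoClasses G ≃o IsoClasses G') :
    (Nat.card G).primeFactors ≃ (Nat.card G').primeFactors :=
  (atomsEquivPrimeFactors G).symm.trans
    ((F.toEquiv.subtypeEquiv fun a => (F.isAtom_iff a).symm).trans (atomsEquivPrimeFactors G'))

theorem card_apply_eq_primeFactorsEquiv_iff {G' : Type*} [Group G'] [Finite G']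
    (F : IsoClasses G ≃o IsoClasses G') {a : IsoClasses G} (ha : IsAtom a)
    (p : (Nat.card G).primeFactors) : card (F a) = primeFactorsEquiv F p ↔ card a = p := by
  have : (primeFactorsEquiv F (atomsEquivPrimeFactors G ⟨a, ha⟩) : ℕ) = card (F a) := by
    simp [primeFactorsEquiv]
  rw [← this, ← coe_atomsEquivPrimeFactors ⟨a, ha⟩, Subtype.coe_inj, Subtype.coe_inj,
    (primeFactorsEquiv F).apply_eq_iff_eq]

variable (K : Subgroup G)

noncomputable def subgroupEmbedding : IsoClasses K ↪o IsoClasses G :=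
  OrderEmbedding.ofMapLEIff
    (Quotient.lift (fun A : Subgroup K => IsoCls (A.map K.subtype)) fun A B ⟨e⟩ =>
      isoCls_eq_isoCls_iff.mpr ⟨(A.equivMapOfInjective _ K.subtype_injective).symm.trans
        (e.trans (B.equivMapOfInjective _ K.subtype_injective))⟩)
    fun x y => by
      induction x using ind with | h A => ?_
      induction y using ind with | h B => ?_
      exact ⟨fun h => isoCls_le_isoCls_of_mulEquiv h
          (A.equivMapOfInjective _ K.subtype_injective).symm
          (B.equivMapOfInjective _ K.subtype_injective).symm,
        fun h => isoCls_le_isoCls_of_mulEquiv h (A.equivMapOfInjective _ K.subtype_injective)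
          (B.equivMapOfInjective _ K.subtype_injective)⟩

@[simp]
theorem subgroupEmbedding_isoCls (A : Subgroup K) :
    subgroupEmbedding K (IsoCls A) = IsoCls (A.map K.subtype) :=
  rfl

theorem range_subgroupEmbedding : Set.range (subgroupEmbedding K) = Set.Iic (IsoCls K) := by
  ext x
  constructor
  · rintro ⟨y, rfl⟩
    induction y using ind with | h A => exact ⟨_, K, rfl, rfl, Subgroup.map_subtype_le A⟩
  · intro hx
    obtain ⟨H, hHK, rfl⟩ := le_isoCls_iff.mp hx
    exact ⟨IsoCls (H.subgroupOf K), by rw [subgroupEmbedding_isoCls,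
      Subgroup.map_subgroupOf_eq_of_le hHK]⟩

noncomputable def iicOrderIso : IsoClasses K ≃o Set.Iic (IsoCls K) :=
  (subgroupEmbedding K).orderIso.trans (OrderIso.setCongr _ _ (range_subgroupEmbedding K))

theorem height_isoCls_of_isPGroup {p : ℕ} [hp : Fact p.Prime] (hG : IsPGroup p G)
    (H : Subgroup G) : Order.height (IsoCls H) = (Nat.card H).factorization p := by
  have hcard (x : IsoClasses G) : card x = p ^ (card x).factorization p := by
    induction x using ind with | h A => ?_
    obtain ⟨n, hn⟩ := IsPGroup.iff_card.mp (hG.to_subgroup A)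
    rw [card_isoCls, hn, Nat.factorization_pow_self hp.out]
  have hmono : StrictMono fun x : IsoClasses G => (card x).factorization p := fun x y h => by
    have := card_strictMono h
    rwa [hcard x, hcard y, Nat.pow_lt_pow_iff_right hp.out.one_lt] at this
  refine (Order.height_eq_of_strictMono _ hmono (fun x b hb => ?_) (IsoCls H)).trans
    (Order.height_nat _)
  induction x using ind with | h A => ?_
  obtain ⟨B, hB⟩ := Sylow.exists_subgroup_card_pow_prime (G := A) p (n := b)
    (by rw [← card_isoCls, hcard (IsoCls A)]; exact pow_dvd_pow p hb.le)
  have hBA : IsoCls (B.map A.subtype) ≤ IsoCls A :=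
    ⟨_, A, rfl, rfl, Subgroup.map_subtype_le B⟩
  have hb' : (card (IsoCls (B.map A.subtype))).factorization p = b := by
    rw [card_isoCls, Subgroup.card_map_of_injective A.subtype_injective, hB,
      Nat.factorization_pow_self hp.out]
  exact ⟨_, lt_of_le_of_ne hBA fun h => hb.ne (hb' ▸ h ▸ rfl), hb'⟩

theorem eq_of_card_eq_pow_of_orderIso {G' : Type*} [Group G'] [Finite G'] {p q m n : ℕ}
    [hp : Fact p.Prime] [hq : Fact q.Prime] (hG : Nat.card G = p ^ m)
    (hG' : Nat.card G' = q ^ n) (e : IsoClasses G ≃o IsoClasses G') : m = n := by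
  have h := Order.height_orderIso e ⊤
  rw [e.map_top] at h
  change Order.height (IsoCls (⊤ : Subgroup G')) = Order.height (IsoCls (⊤ : Subgroup G)) at h
  rw [height_isoCls_of_isPGroup (IsPGroup.of_card hG), height_isoCls_of_isPGroup
    (IsPGroup.of_card hG'), Subgroup.card_top, Subgroup.card_top, hG, hG',
    Nat.factorization_pow_self hp.out, Nat.factorization_pow_self hq.out] at h
  exact_mod_cast h.symm

end Finite

end Group

section CommGroup

open CommGroup

variable {G : Type*} [CommGroup G]

theorem isoCls_inf_primaryComponent_mono {H K : Subgroup G} (h : IsoCls H ≤ IsoCls K)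
    (p : ℕ) : IsoCls (H ⊓ primaryComponent G p) ≤ IsoCls (K ⊓ primaryComponent G p) := by
  obtain ⟨f, hf⟩ := isoCls_le_isoCls_iff.mp h
  refine isoCls_le_of_range_le (f := K.subtype.comp (f.comp (Subgroup.inclusion inf_le_left)))
    (K.subtype_injective.comp (hf.comp (Subgroup.inclusion_injective _))) ?_
  rintro _ ⟨x, rfl⟩
  obtain ⟨k, hk⟩ := (Subgroup.mem_inf.mp x.2).2
  have hx : Subgroup.inclusion inf_le_left x ^ p ^ k = 1 := Subtype.ext hk
  refine ⟨(f _).2, k, ?_⟩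
  simp [← Subgroup.coe_pow, ← map_pow, hx]

variable [Finite G]

noncomputable def primaryPart (p : ℕ) : IsoClasses G → IsoClasses G :=
  Quotient.lift (fun H => IsoCls (H ⊓ primaryComponent G p)) fun _ _ h =>
    have h : IsoCls _ = IsoCls _ := Quotient.sound h
    le_antisymm (isoCls_inf_primaryComponent_mono h.le p)
      (isoCls_inf_primaryComponent_mono h.ge p)

@[simp]
theorem primaryPart_isoCls (p : ℕ) (H : Subgroup G) :
    primaryPart p (IsoCls H) = IsoCls (H ⊓ primaryComponent G p) :=
  rfl

theorem primaryPart_le (p : ℕ) (x : IsoClasses G) :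
    primaryPart p x ≤ IsoCls (primaryComponent G p) := by
  induction x using ind with | h H => exact ⟨_, _, rfl, rfl, inf_le_right⟩

theorem isoCls_iSup_le_iSup {A B : (Nat.card G).primeFactors → Subgroup G}
    (hA : ∀ p, A p ≤ primaryComponent G p) (hB : ∀ p, B p ≤ primaryComponent G p)
    (h : ∀ p, IsoCls (A p) ≤ IsoCls (B p)) : IsoCls (⨆ p, A p) ≤ IsoCls (⨆ p, B p) := by
  choose f hf using fun p => isoCls_le_isoCls_iff.mp (h p)
  let eA := (iSupIndep_primaryComponent.mono hA).piMulEquivISup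
  let eB := (iSupIndep_primaryComponent.mono hB).piMulEquivISup
  exact isoCls_le_isoCls_iff.mpr
    ⟨eB.toMonoidHom.comp ((MonoidHom.piMap f).comp eA.symm.toMonoidHom),
      eB.injective.comp ((Function.Injective.piMap hf).comp eA.symm.injective)⟩

variable (G) in
noncomputable def primaryDecomposition :
    IsoClasses G ≃o
      ∀ p : (Nat.card G).primeFactors, Set.Iic (IsoCls (primaryComponent G p)) :=
  OrderIso.ofSurjective
    (OrderEmbedding.ofMapLEIff (fun x p => ⟨primaryPart p x, primaryPart_le p x⟩) fun x y => by
      induction x using ind with | h H => ?_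
      induction y using ind with | h K => ?_
      simp only [Pi.le_def, Subtype.mk_le_mk, primaryPart_isoCls]
      refine ⟨fun h => ?_, fun h p => isoCls_inf_primaryComponent_mono h p⟩
      rw [← iSup_inf_primaryComponent H, ← iSup_inf_primaryComponent K]
      exact isoCls_iSup_le_iSup (fun _ => inf_le_right) (fun _ => inf_le_right) h)
    fun y => by
      choose A hA hAy using fun p => le_isoCls_iff.mp (y p).2
      refine ⟨IsoCls (⨆ p, A p), funext fun p => Subtype.ext ?_⟩
      change IsoCls ((⨆ q, A q) ⊓ primaryComponent G p) = y p
      rw [iSup_inf_primaryComponent_of_le hA, hAy]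

theorem le_isoCls_primaryComponent_iff {p : ℕ} (hp : p.Prime) {x : IsoClasses G} :
    x ≤ IsoCls (primaryComponent G p) ↔ ∀ a ≤ x, IsAtom a → card a = p := by
  have := Fact.mk hp
  refine ⟨fun hx a hax ha => ?_, fun h => ?_⟩
  · have hq := isAtom_iff_prime_card.mp ha
    obtain ⟨n, hn⟩ := IsPGroup.iff_card.mp (primaryComponent.isPGroup (G := G) (p := p))
    have : card a ∣ p ^ n := hn ▸ card_dvd_card_of_le (hax.trans hx)
    exact (Nat.prime_dvd_prime_iff_eq hq hp).mp (hq.dvd_of_dvd_pow this)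
  · induction x using ind with | h H => ?_
    have hH : Nat.card H = p ^ (Nat.card H).primeFactorsList.length :=
      Nat.eq_prime_pow_of_unique_prime_dvd Nat.card_pos.ne' fun hd hdH => by
        obtain ⟨a, haH, ha⟩ := exists_le_card_eq_prime (x := IsoCls H) hd hdH
        exact ha ▸ h a haH (isAtom_iff_prime_card.mpr (ha ▸ hd))
    refine ⟨H, _, rfl, rfl, fun x hx =>
      mem_primaryComponent.mpr ⟨(Nat.card H).primeFactorsList.length, ?_⟩⟩
    have := pow_card_eq_one' (x := (⟨x, hx⟩ : H))
    rw [hH] at this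
    simpa using congrArg Subtype.val this

theorem map_isoCls_primaryComponent {G' : Type*} [CommGroup G'] [Finite G']
    (F : IsoClasses G ≃o IsoClasses G') (p : (Nat.card G).primeFactors) :
    F (IsoCls (primaryComponent G p)) =
      IsoCls (primaryComponent G' (primeFactorsEquiv F p)) := by
  refine eq_of_forall_le_iff fun y => ?_
  rw [← F.apply_symm_apply y, F.le_iff_le,
    le_isoCls_primaryComponent_iff (Nat.prime_of_mem_primeFactors p.2),
    le_isoCls_primaryComponent_iff (Nat.prime_of_mem_primeFactors (primeFactorsEquiv F p).2),
    ← F.toEquiv.forall_congr_right]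
  refine forall_congr' fun a => ?_
  rw [OrderIso.coe_toEquiv, F.le_iff_le, F.isAtom_iff]
  exact imp_congr_right fun _ => imp_congr_right fun ha =>
    (card_apply_eq_primeFactorsEquiv_iff F ha p).symm

end CommGroup

end IsoClasses

open CommGroup IsoClasses

/-- For finite abelian groups `G₁`, `G₂`: `IsoClasses G₁` and
`IsoClasses G₂` are order isomorphic iff there is a bijection `σ` between the prime
divisors of `|G₁|` and of `|G₂|` such that for every prime `p ∣ |G₁|` the corresponding
Sylow subgroups have order isomorphic posets of isomorphism classes of subgroups (in
particular, the exponents in the factorizations match). -/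
theorem isoClasses_orderIso_iff_sylow (G₁ : Type*) [CommGroup G₁] [Finite G₁]
    (G₂ : Type*) [CommGroup G₂] [Finite G₂] :
    Nonempty (IsoClasses G₁ ≃o IsoClasses G₂) ↔
      ∃ σ : (Nat.card G₁).primeFactors ≃ (Nat.card G₂).primeFactors,
        ∀ p : (Nat.card G₁).primeFactors,
          (Nat.card G₁).factorization p = (Nat.card G₂).factorization (σ p) ∧
          ∀ (P : Sylow p G₁) (Q : Sylow (σ p : ℕ) G₂),
            Nonempty (IsoClasses (↥(P : Subgroup G₁)) ≃o IsoClasses (↥(Q : Subgroup G₂))) := by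
  constructor
  · rintro ⟨F⟩
    refine ⟨primeFactorsEquiv F, fun p => ?_⟩
    have := Fact.mk (Nat.prime_of_mem_primeFactors p.2)
    have := Fact.mk (Nat.prime_of_mem_primeFactors (primeFactorsEquiv F p).2)
    let e := (iicOrderIso _).trans
      ((F.iicCongr (map_isoCls_primaryComponent F p)).trans (iicOrderIso _).symm)
    refine ⟨eq_of_card_eq_pow_of_orderIso card_primaryComponent card_primaryComponent e,
      fun P Q => ?_⟩
    rw [P.coe_eq_primaryComponent, Q.coe_eq_primaryComponent]
    exact ⟨e⟩
  · rintro ⟨σ, hσ⟩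
    have e (p : (Nat.card G₁).primeFactors) : Set.Iic (IsoCls (primaryComponent G₁ p)) ≃o
        Set.Iic (IsoCls (primaryComponent G₂ (σ p))) := by
      have := Fact.mk (Nat.prime_of_mem_primeFactors p.2)
      have := Fact.mk (Nat.prime_of_mem_primeFactors (σ p).2)
      have h := (hσ p).2 default default
      rw [Sylow.coe_eq_primaryComponent, Sylow.coe_eq_primaryComponent] at h
      exact (iicOrderIso _).symm.trans (h.some.trans (iicOrderIso _))
    exact ⟨(primaryDecomposition G₁).trans
      ((OrderIso.piCongr σ e).trans (primaryDecomposition G₂).symm)⟩
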